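/- For every nonzero integer n, neither 0 nor ū is a root of the cubic P_n: P_n(0) ≠ 0 and P_n(ū) ≠ 0. (Equivalently, 0 and ū are never eigenvalues of the matrix R_n arising from the non-barotropic linearized system.) -/

import Mathlib

open Complex

/-- The characteristic cubic `P_n` of the matrix `R_n` arising from the non-barotropic
linearized compressible Navier–Stokes system. -/
noncomputable def Pcubic (lam kap u ρ θ R c : ℝ) (n : ℤ) (ν : ℂ) : ℂ :=
  ν ^ 3 - (((lam : ℂ) + (kap : ℂ)) * Complex.I * (n : ℂ) + 3 * (u : ℂ)) * ν ^ 2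
    - ((lam : ℂ) * (kap : ℂ) * (n : ℂ) ^ 2
        - 2 * ((lam : ℂ) + (kap : ℂ)) * (u : ℂ) * Complex.I * (n : ℂ)
        - 3 * (u : ℂ) ^ 2 + (R : ℂ) ^ 2 * (θ : ℂ) / (c : ℂ) + (R : ℂ) * (θ : ℂ)) * ν
    + (lam : ℂ) * (kap : ℂ) * (u : ℂ) * (n : ℂ) ^ 2
    - ((lam : ℂ) + (kap : ℂ)) * (u : ℂ) ^ 2 * Complex.I * (n : ℂ)
    - (u : ℂ) ^ 3 + (R : ℂ) ^ 2 * (θ : ℂ) / (c : ℂ) * (u : ℂ)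
    + (R : ℂ) * (θ : ℂ) * (kap : ℂ) * Complex.I * (n : ℂ) + (R : ℂ) * (θ : ℂ) * (u : ℂ)

/-!
At `ν = ū` all real terms of `P_n` cancel and only `i R θ̄ κ₀ n` survives. At `ν = 0` the real
part vanishes only if `ū² = λ₀κ₀n² + R²θ̄/c₀ + Rθ̄` and the imaginary part only if
`Rθ̄κ₀ = (λ₀ + κ₀)ū²`; substituting the first into the second makes the right-hand side exceed
`Rθ̄κ₀` by the positive amount `(λ₀ + κ₀)(λ₀κ₀n² + R²θ̄/c₀) + λ₀Rθ̄`.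
-/

section

variable (lam kap u ρ θ R c : ℝ) (n : ℤ)

theorem Pcubic_zero :
    Pcubic lam kap u ρ θ R c n 0 =
      ⟨u * (lam * kap * n ^ 2 + R ^ 2 * θ / c + R * θ - u ^ 2),
        n * (R * θ * kap - (lam + kap) * u ^ 2)⟩ := by
  rw [mk_eq_add_mul_I, Pcubic]
  push_cast
  ring

theorem Pcubic_ofReal_self : Pcubic lam kap u ρ θ R c n u = ((R * θ * kap * n : ℝ) : ℂ) * I := by
  rw [Pcubic]
  push_cast
  ring

end

theorem Pcubic_zero_ne_zero {lam kap u θ R c : ℝ} (ρ : ℝ) (hlam : 0 < lam) (hkap : 0 < kap)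
    (hu : 0 < u) (hθ : 0 < θ) (hR : 0 < R) (hc : 0 < c) {n : ℤ} (hn : n ≠ 0) :
    Pcubic lam kap u ρ θ R c n 0 ≠ 0 := by
  rw [Pcubic_zero]
  intro h
  obtain ⟨hre, him⟩ := Complex.ext_iff.mp h
  simp only [zero_re, zero_im, mul_eq_zero, hu.ne', Int.cast_eq_zero, hn, false_or,
    sub_eq_zero] at hre him
  have hgap : 0 < (lam + kap) * (lam * kap * n ^ 2 + R ^ 2 * θ / c) + lam * R * θ := by
    positivity
  exact hgap.ne' (by linear_combination (lam + kap) * hre - him)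

theorem Pcubic_ofReal_self_ne_zero {lam kap u θ R c : ℝ} (ρ : ℝ) (hkap : kap ≠ 0) (hθ : θ ≠ 0)
    (hR : R ≠ 0) {n : ℤ} (hn : n ≠ 0) : Pcubic lam kap u ρ θ R c n u ≠ 0 := by
  rw [Pcubic_ofReal_self]
  exact mul_ne_zero (ofReal_ne_zero.mpr (by positivity)) I_ne_zero

theorem zero_and_ubar_not_roots_general (lam kap u ρ θ R c : ℝ) (hlam : 0 < lam) (hkap : 0 < kap)
    (hu : 0 < u) (hθ : 0 < θ) (hR : 0 < R) (hc : 0 < c)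
    (n : ℤ) (hn : n ≠ 0) :
    Pcubic lam kap u ρ θ R c n 0 ≠ 0 ∧ Pcubic lam kap u ρ θ R c n (u : ℂ) ≠ 0 :=
  ⟨Pcubic_zero_ne_zero ρ hlam hkap hu hθ hR hc hn,
    Pcubic_ofReal_self_ne_zero ρ hkap.ne' hθ.ne' hR.ne' hn⟩

/-- For every nonzero integer `n`, neither `0` nor `ū` is a root of the cubic `P_n`;
equivalently, `0` and `ū` are never eigenvalues of the matrix `R_n` of the
non-barotropic linearized system. -/
theorem zero_and_ubar_not_roots (lam kap u ρ θ R c : ℝ) (hlam : 0 < lam) (hkap : 0 < kap)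
    (hu : 0 < u) (hρ : 0 < ρ) (hθ : 0 < θ) (hR : 0 < R) (hc : 0 < c)
    (n : ℤ) (hn : n ≠ 0) :
    Pcubic lam kap u ρ θ R c n 0 ≠ 0 ∧ Pcubic lam kap u ρ θ R c n (u : ℂ) ≠ 0 :=
  zero_and_ubar_not_roots_general lam kap u ρ θ R c hlam hkap hu hθ hR hc n hn
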